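/- Let (C, ∂, A) be a finite-dimensional filtered complex over the Novikov field Λ with a fixed generating basis x_1,…,x_n and strictly action-decreasing differential ∂ (∂² = 0). Suppose p of the generators are ε-isolated, meaning every nonzero matrix entry term f T^a of ∂ from or to such a generator x has action difference strictly greater than ε. Then the number of bars of length greater than ε in the barcode of C is at least p/2. -/

import Mathlib

open Finset Classical
noncomputable section

/-- The Novikov valuation `ν(λ) = min{a_j : f_j ≠ 0}`. -/
noncomputable def nu {F : Type*} [Field F] (l : HahnSeries ℝ F) : ℝ := l.order

/-- The action `A(∑ λᵢ xᵢ) = maxᵢ (A(xᵢ) − ν(λᵢ))` on `C = ⊕ᵢ Λ xᵢ`. -/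
noncomputable def act {F : Type*} [Field F] {ι : Type*} [Fintype ι]
    (Ax : ι → ℝ) (c : ι → HahnSeries ℝ F) : WithBot ℝ :=
  Finset.univ.sup fun i => if c i = 0 then (⊥ : WithBot ℝ) else ((Ax i - nu (c i) : ℝ) : WithBot ℝ)

/-- `A(λ x) = A(x) − ν(λ)` for `λ ≠ 0`, extended by `A(0) = ⊥`. -/
noncomputable def scaledAct {F : Type*} [Field F] {ι : Type*} [Fintype ι]
    (Ax : ι → ℝ) (l : HahnSeries ℝ F) (v : ι → HahnSeries ℝ F) : WithBot ℝ :=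
  if l = 0 then ⊥ else WithBot.map (fun t => t - nu l) (act Ax v)

/-- Orthogonality of a finite family: `A(∑ λᵢ ξᵢ) = maxᵢ (A(ξᵢ) − ν(λᵢ))`. -/
def Orthogonal {F : Type*} [Field F] {ι : Type*} [Fintype ι] {κ : Type*} [Fintype κ]
    (Ax : ι → ℝ) (ξ : κ → ι → HahnSeries ℝ F) : Prop :=
  ∀ l : κ → HahnSeries ℝ F,
    act Ax (∑ j, l j • ξ j) = Finset.univ.sup fun j => scaledAct Ax (l j) (ξ j)

/-- The differential `∂` is strictly action-decreasing. -/
def StrictlyActionDecreasing {F : Type*} [Field F] {ι : Type*} [Fintype ι]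
    (Ax : ι → ℝ)
    (D : (ι → HahnSeries ℝ F) →ₗ[HahnSeries ℝ F] (ι → HahnSeries ℝ F)) : Prop :=
  ∀ c : ι → HahnSeries ℝ F, c ≠ 0 → act Ax (D c) < act Ax c

/-- A generator `xᵢ` is `ε`-isolated: every nonzero term `f T^a` of a matrix coefficient
`λ_{ij}` of `∂` from or to `xᵢ` gives an arrow of length (action difference)
`A(xᵢ) − A(xⱼ) + a > ε`. -/
def EpsIsolated {F : Type*} [Field F] {ι : Type*} [Fintype ι]
    (Ax : ι → ℝ)
    (D : (ι → HahnSeries ℝ F) →ₗ[HahnSeries ℝ F] (ι → HahnSeries ℝ F))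
    (ε : ℝ) (i : ι) : Prop :=
  (∀ j : ι, ∀ a ∈ (D (Pi.single i 1) j).support, ε < Ax i - Ax j + a) ∧
  (∀ j : ι, ∀ a ∈ (D (Pi.single j 1) i).support, ε < Ax j - Ax i + a)

/-- A singular decomposition of the filtered complex `(C, ∂, A)`: an orthogonal basis
`{αᵢ, ηⱼ, γⱼ}` with `∂αᵢ = 0` and `∂γⱼ = ηⱼ`.  The finite bars of the barcode are the
action differences `A(γⱼ) − A(ηⱼ)`, and there are `nI = dim_Λ H(C)` infinite bars. -/
structure SingularDecomposition {F : Type*} [Field F] {ι : Type*} [Fintype ι]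
    (Ax : ι → ℝ)
    (D : (ι → HahnSeries ℝ F) →ₗ[HahnSeries ℝ F] (ι → HahnSeries ℝ F)) where
  nI : ℕ
  nF : ℕ
  alpha : Fin nI → ι → HahnSeries ℝ F
  eta : Fin nF → ι → HahnSeries ℝ F
  gamma : Fin nF → ι → HahnSeries ℝ F
  indep : LinearIndependent (HahnSeries ℝ F) (Sum.elim alpha (Sum.elim eta gamma))
  spans : ⊤ ≤ Submodule.span (HahnSeries ℝ F)
      (Set.range (Sum.elim alpha (Sum.elim eta gamma)))
  orth : Orthogonal Ax (Sum.elim alpha (Sum.elim eta gamma))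
  d_alpha : ∀ j, D (alpha j) = 0
  d_gamma : ∀ j, D (gamma j) = eta j

/-- The number of bars of length `> ε`: all `nI` infinite bars together with the finite
bars `A(γⱼ) − A(ηⱼ) > ε`. -/
noncomputable def barCount {F : Type*} [Field F] {ι : Type*} [Fintype ι]
    {Ax : ι → ℝ} {D : (ι → HahnSeries ℝ F) →ₗ[HahnSeries ℝ F] (ι → HahnSeries ℝ F)}
    (SD : SingularDecomposition Ax D) (ε : ℝ) : ℕ :=
  SD.nI + Nat.card {j : Fin SD.nF |
    act Ax (SD.eta j) + ((ε : ℝ) : WithBot ℝ) < act Ax (SD.gamma j)}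

/-!
Let `W` be spanned by the `ηⱼ, γⱼ` of the finite bars of length `≤ ε`; we show that `W` meets
the span of the `ε`-isolated generators `xᵢ, i ∈ s` trivially, so that
`p ≤ dim C - dim W = n_I + 2 #{long finite bars} ≤ 2 b_ε(C)`.

Let `x = w + c ≠ 0` with `w = ∂g`, `g, c ∈ span γ` built from short bars, and `x` supported on `s`.
Arrows out of `s` are long, so `A(∂x) + ε < A(x)`; as the bars are short,
`A(c) ≤ A(∂c) + ε = A(∂x) + ε < A(x)` and `A(g) ≤ A(w) + ε ≤ A(x) + ε`. Arrows into `s` are long,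
so the restriction of `w = ∂g` to `s` has action `< A(g) - ε ≤ A(x)`. Then `x = w|ₛ + c|ₛ` has
action `< A(x)`, a contradiction.
-/

section

variable {F : Type*} [Field F] {ι : Type*} [Fintype ι] {Ax : ι → ℝ}

theorem le_act_of_ne_zero {c : ι → HahnSeries ℝ F} {i : ι} (h : c i ≠ 0) :
    ((Ax i - nu (c i) : ℝ) : WithBot ℝ) ≤ act Ax c :=
  Finset.le_sup_of_le (Finset.mem_univ i) (by simp [h])

theorem act_le_iff {c : ι → HahnSeries ℝ F} {b : WithBot ℝ} :
    act Ax c ≤ b ↔ ∀ i, c i ≠ 0 → ((Ax i - nu (c i) : ℝ) : WithBot ℝ) ≤ b := by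
  simp only [act, Finset.sup_le_iff, Finset.mem_univ, true_imp_iff]
  exact forall_congr' fun i => by by_cases h : c i = 0 <;> simp [h]

theorem act_lt_coe_iff {c : ι → HahnSeries ℝ F} {r : ℝ} :
    act Ax c < r ↔ ∀ i, c i ≠ 0 → Ax i - nu (c i) < r := by
  simp only [act, Finset.sup_lt_iff (WithBot.bot_lt_coe r), Finset.mem_univ, true_imp_iff]
  exact forall_congr' fun i => by by_cases h : c i = 0 <;> simp [h]

theorem act_ne_bot {c : ι → HahnSeries ℝ F} (h : c ≠ 0) : act Ax c ≠ ⊥ := by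
  obtain ⟨i, hi⟩ := Function.ne_iff.mp h
  exact ne_bot_of_le_ne_bot WithBot.coe_ne_bot (le_act_of_ne_zero hi)

theorem act_add_le (x y : ι → HahnSeries ℝ F) : act Ax (x + y) ≤ act Ax x ⊔ act Ax y := by
  refine act_le_iff.mpr fun i hxy => ?_
  simp only [Pi.add_apply] at hxy ⊢
  by_cases hx : x i = 0
  · simpa [hx] using le_sup_of_le_right (le_act_of_ne_zero (c := y) (by simpa [hx] using hxy))
  by_cases hy : y i = 0
  · simpa [hy] using le_sup_of_le_left (le_act_of_ne_zero (c := x) (by simpa [hy] using hxy))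
  rcases min_le_iff.mp (HahnSeries.min_order_le_order_add hxy) with h | h
  · exact le_sup_of_le_left <| (WithBot.coe_le_coe.mpr (by unfold nu; linarith)).trans
      (le_act_of_ne_zero hx)
  · exact le_sup_of_le_right <| (WithBot.coe_le_coe.mpr (by unfold nu; linarith)).trans
      (le_act_of_ne_zero hy)

theorem act_indicator_le (t : Set ι) (c : ι → HahnSeries ℝ F) :
    act Ax (t.indicator c) ≤ act Ax c := by
  refine act_le_iff.mpr fun i hi => ?_
  have hit : i ∈ t := (Set.indicator_apply_ne_zero.mp hi).1
  rw [Set.indicator_of_mem hit] at hi ⊢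
  exact le_act_of_ne_zero hi

theorem scaledAct_zero_left (v : ι → HahnSeries ℝ F) : scaledAct Ax 0 v = ⊥ := if_pos rfl

theorem scaledAct_le_scaledAct_add {u v : ι → HahnSeries ℝ F} {ε : ℝ}
    (h : act Ax v ≤ act Ax u + ε) (m : HahnSeries ℝ F) :
    scaledAct Ax m v ≤ scaledAct Ax m u + ε := by
  unfold scaledAct
  split_ifs
  · simp
  generalize act Ax v = a, act Ax u = b at h
  induction a using WithBot.recBotCoe with
  | bot => simp
  | coe a =>
    induction b using WithBot.recBotCoe with
    | bot => simp at h
    | coe b =>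
      simp only [WithBot.map_coe, ← WithBot.coe_add, WithBot.coe_le_coe] at h ⊢
      linarith

section Arrows

variable (D : (ι → HahnSeries ℝ F) →ₗ[HahnSeries ℝ F] (ι → HahnSeries ℝ F))

theorem exists_arrow_add_le_nu {v : ι → HahnSeries ℝ F} {i : ι} (h : D v i ≠ 0) :
    ∃ j, v j ≠ 0 ∧ ∃ a ∈ (D (Pi.single j 1) i).support, nu (v j) + a ≤ nu (D v i) := by
  have hsum : D v i = ∑ j, D (Pi.single j 1) i * v j := by
    rw [← LinearMap.toMatrix'_mulVec D v]; rfl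
  have hcoeff : (∑ j, D (Pi.single j 1) i * v j).coeff (nu (D v i)) ≠ 0 :=
    hsum ▸ HahnSeries.coeff_order_eq_zero.not.mpr h
  rw [HahnSeries.coeff_sum] at hcoeff
  obtain ⟨j, -, hj⟩ := Finset.exists_ne_zero_of_sum_ne_zero hcoeff
  obtain ⟨a, ha, b, hb, hab⟩ := HahnSeries.support_mul_subset hj
  have hvj : v j ≠ 0 := by rintro h0; simp [h0] at hb
  refine ⟨j, hvj, a, ha, ?_⟩
  have := HahnSeries.order_le_of_coeff_ne_zero hb
  unfold nu at *
  linarith [show a + b = (D v i).order from hab]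

theorem act_indicator_add_lt {ε : ℝ} {t : Set ι} {v : ι → HahnSeries ℝ F} {b : WithBot ℝ}
    (hb : b ≠ ⊥) (hv : act Ax v ≤ b)
    (harrow : ∀ i ∈ t, ∀ j, v j ≠ 0 → ∀ a ∈ (D (Pi.single j 1) i).support,
      ε < Ax j - Ax i + a) :
    act Ax (t.indicator (D v)) + ε < b := by
  obtain ⟨r, rfl⟩ := WithBot.ne_bot_iff_exists.mp hb
  have hlt : act Ax (t.indicator (D v)) < ((r - ε : ℝ) : WithBot ℝ) := by
    refine act_lt_coe_iff.mpr fun i hi => ?_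
    have hit : i ∈ t := (Set.indicator_apply_ne_zero.mp hi).1
    rw [Set.indicator_of_mem hit] at hi ⊢
    obtain ⟨j, hj, a, ha, hle⟩ := exists_arrow_add_le_nu D hi
    have hvj := WithBot.coe_le_coe.mp ((le_act_of_ne_zero hj).trans hv)
    linarith [harrow i hit j hj a ha]
  generalize act Ax (t.indicator (D v)) = c at hlt
  induction c using WithBot.recBotCoe with
  | bot => simp
  | coe c =>
    rw [← WithBot.coe_add, WithBot.coe_lt_coe] at *
    linarith

end Arrows

section Orthogonality

variable {κ κ' : Type*} [Fintype κ] [Fintype κ']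
  {ξ : κ → ι → HahnSeries ℝ F} {ζ : κ' → ι → HahnSeries ℝ F}

theorem Orthogonal.act_sum_add_sum (h : Orthogonal Ax (Sum.elim ξ ζ))
    (a : κ → HahnSeries ℝ F) (b : κ' → HahnSeries ℝ F) :
    act Ax (∑ j, a j • ξ j + ∑ j, b j • ζ j) =
      (Finset.univ.sup fun j => scaledAct Ax (a j) (ξ j)) ⊔
        Finset.univ.sup fun j => scaledAct Ax (b j) (ζ j) := by
  have := h (Sum.elim a b)
  rw [Fintype.sum_sum_type, ← Finset.univ_disjSum_univ, Finset.sup_disjSum] at this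
  simpa using this

theorem Orthogonal.sumElim_left (h : Orthogonal Ax (Sum.elim ξ ζ)) : Orthogonal Ax ξ := by
  intro a
  simpa [scaledAct_zero_left] using h.act_sum_add_sum a 0

theorem Orthogonal.sumElim_right (h : Orthogonal Ax (Sum.elim ξ ζ)) : Orthogonal Ax ζ := by
  intro b
  simpa [scaledAct_zero_left] using h.act_sum_add_sum 0 b

theorem Orthogonal.act_sum_le_act_sum_add (h : Orthogonal Ax (Sum.elim ξ ζ))
    (a : κ → HahnSeries ℝ F) (b : κ' → HahnSeries ℝ F) :
    act Ax (∑ j, a j • ξ j) ≤ act Ax (∑ j, a j • ξ j + ∑ j, b j • ζ j) := by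
  rw [h.act_sum_add_sum, h.sumElim_left a]
  exact le_sup_left

end Orthogonality

namespace SingularDecomposition

variable {D : (ι → HahnSeries ℝ F) →ₗ[HahnSeries ℝ F] (ι → HahnSeries ℝ F)}
  (SD : SingularDecomposition Ax D)

theorem orthogonal_eta_gamma : Orthogonal Ax (Sum.elim SD.eta SD.gamma) :=
  SD.orth.sumElim_right

def longBars (ε : ℝ) : Set (Fin SD.nF) :=
  {j | act Ax (SD.eta j) + ((ε : ℝ) : WithBot ℝ) < act Ax (SD.gamma j)}

theorem act_sum_smul_gamma_le {ε : ℝ} (m : Fin SD.nF → HahnSeries ℝ F)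
    (hm : ∀ j ∈ SD.longBars ε, m j = 0) :
    act Ax (∑ j, m j • SD.gamma j) ≤ act Ax (∑ j, m j • SD.eta j) + ε := by
  rw [SD.orthogonal_eta_gamma.sumElim_right m, SD.orthogonal_eta_gamma.sumElim_left m]
  refine Finset.sup_le fun j _ => ?_
  by_cases hj : j ∈ SD.longBars ε
  · simp [hm j hj, scaledAct_zero_left]
  · refine (scaledAct_le_scaledAct_add (not_lt.mp hj) (m j)).trans ?_
    gcongr
    exact Finset.le_sup (f := fun j => scaledAct Ax (m j) (SD.eta j)) (Finset.mem_univ j)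

theorem eq_zero_of_short_of_isolated (hD2 : ∀ c, D (D c) = 0) {ε : ℝ} {s : Finset ι}
    (hs : ∀ i ∈ s, EpsIsolated Ax D ε i) {k l : Fin SD.nF → HahnSeries ℝ F}
    (hk : ∀ j ∈ SD.longBars ε, k j = 0) (hl : ∀ j ∈ SD.longBars ε, l j = 0)
    {x : ι → HahnSeries ℝ F} (hx : ∑ j, k j • SD.eta j + ∑ j, l j • SD.gamma j = x)
    (hxs : ∀ i ∉ s, x i = 0) : x = 0 := by
  by_contra hx0
  have hDγ (m : Fin SD.nF → HahnSeries ℝ F) :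
      D (∑ j, m j • SD.gamma j) = ∑ j, m j • SD.eta j := by
    simp [SD.d_gamma]
  set w := ∑ j, k j • SD.eta j
  set c := ∑ j, l j • SD.gamma j
  set g := ∑ j, k j • SD.gamma j
  have hDg : D g = w := hDγ k
  have hDx : D x = ∑ j, l j • SD.eta j := by rw [← hx, map_add, ← hDg, hD2, zero_add, hDγ]
  have hx_bot : act Ax x ≠ ⊥ := act_ne_bot hx0
  have hDx_lt : act Ax (D x) + ε < act Ax x := by
    simpa using act_indicator_add_lt D (t := Set.univ) hx_bot le_rfl fun i _ j hj a ha =>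
      (hs j (Not.imp_symm (hxs j) hj)).1 i a ha
  have hc_lt : act Ax c < act Ax x := calc
    act Ax c ≤ act Ax (D x) + ε := hDx ▸ SD.act_sum_smul_gamma_le l hl
    _ < act Ax x := hDx_lt
  have hg_le : act Ax g ≤ act Ax x + ε := calc
    act Ax g ≤ act Ax w + ε := SD.act_sum_smul_gamma_le k hk
    _ ≤ act Ax x + ε := by
      gcongr
      rw [← hx]
      exact SD.orthogonal_eta_gamma.act_sum_le_act_sum_add k l
  have hw_lt : act Ax ((s : Set ι).indicator w) < act Ax x := by
    have := act_indicator_add_lt D (t := s)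
      (WithBot.add_ne_bot.mpr ⟨hx_bot, WithBot.coe_ne_bot⟩) hg_le
      fun i hi j _ a ha => (hs i hi).2 j a ha
    rwa [hDg, WithBot.add_lt_add_iff_right WithBot.coe_ne_bot] at this
  have hx_split : (s : Set ι).indicator w + (s : Set ι).indicator c = x := by
    rw [← Set.indicator_add', hx, Set.indicator_eq_self]
    exact fun i hi => Not.imp_symm (hxs i) hi
  have hx_le := act_add_le (Ax := Ax) ((s : Set ι).indicator w) ((s : Set ι).indicator c)
  rw [hx_split] at hx_le
  exact hx_le.not_gt (sup_lt_iff.mpr ⟨hw_lt, (act_indicator_le _ _).trans_lt hc_lt⟩)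

theorem card_le_of_isolated (hD2 : ∀ c, D (D c) = 0) {ε : ℝ} {s : Finset ι}
    (hs : ∀ i ∈ s, EpsIsolated Ax D ε i) :
    s.card ≤ SD.nI + 2 * Nat.card (SD.longBars ε) := by
  let B := Module.Basis.mk SD.indep SD.spans
  let L := SD.longBars ε
  let e : Fin SD.nI ⊕ (L ⊕ L) → Fin SD.nI ⊕ (Fin SD.nF ⊕ Fin SD.nF) :=
    Sum.map id (Sum.map Subtype.val Subtype.val)
  -- the coordinates along the infinite bars and the long finite bars; the short bars span `ker π`
  let π := LinearMap.funLeft (HahnSeries ℝ F) (HahnSeries ℝ F) e ∘ₗ B.equivFun.toLinearMap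
  have hind : LinearIndependent (HahnSeries ℝ F) (fun i : s => π (Pi.single (i : ι) 1)) := by
    refine ((Pi.basisFun (HahnSeries ℝ F) ι).linearIndependent.comp _
      Subtype.val_injective).map (f := π) ?_
    rw [Submodule.disjoint_def]
    intro x hxs hxπ
    have hx_s : ∀ i ∉ s, x i = 0 := by
      rw [Set.range_comp, Subtype.range_coe, Module.Basis.mem_span_image] at hxs
      intro i hi
      simpa using Finsupp.notMem_support_iff.mp fun h => hi (hxs h)
    have hcoord (m : Fin SD.nI ⊕ (L ⊕ L)) : B.equivFun x (e m) = 0 := congrFun hxπ m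
    have hx : ∑ j, B.equivFun x (.inr (.inl j)) • SD.eta j +
        ∑ j, B.equivFun x (.inr (.inr j)) • SD.gamma j = x := by
      have hα (i : Fin SD.nI) : B.equivFun x (.inl i) = 0 := hcoord (.inl i)
      have := B.sum_equivFun x
      simpa only [Fintype.sum_sum_type, hα, zero_smul, Finset.sum_const_zero, zero_add, B,
        Module.Basis.coe_mk, Sum.elim_inl, Sum.elim_inr] using this
    exact SD.eq_zero_of_short_of_isolated hD2 hs (fun j hj => hcoord (.inr (.inl ⟨j, hj⟩)))
      (fun j hj => hcoord (.inr (.inr ⟨j, hj⟩))) hx hx_s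
  simpa [Nat.card_eq_fintype_card, two_mul] using hind.fintype_card_le_finrank

end SingularDecomposition

end

theorem barCount_ge_half_isolated_general {F : Type*} [Field F] {ι : Type*} [Fintype ι]
    (Ax : ι → ℝ) (D : (ι → HahnSeries ℝ F) →ₗ[HahnSeries ℝ F] (ι → HahnSeries ℝ F))
    (hD2 : ∀ c, D (D c) = 0)
    (SD : SingularDecomposition Ax D) (ε : ℝ)
    (s : Finset ι) (hs : ∀ i ∈ s, EpsIsolated Ax D ε i) :
    (s.card : ℝ) / 2 ≤ (barCount SD ε : ℝ) := by
  have hcard : s.card ≤ SD.nI + 2 * Nat.card (SD.longBars ε) := SD.card_le_of_isolated hD2 hs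
  have hbar : barCount SD ε = SD.nI + Nat.card (SD.longBars ε) := rfl
  rw [hbar, div_le_iff₀ two_pos]
  exact_mod_cast (by omega : s.card ≤ (SD.nI + Nat.card (SD.longBars ε)) * 2)

/-- If `p` of the generators of a finite-dimensional filtered complex `(C, ∂, A)` over the
Novikov field are `ε`-isolated, then the number of bars of length greater than `ε` in the
barcode of `C` is at least `p/2`. -/
theorem barCount_ge_half_isolated {F : Type*} [Field F] {ι : Type*} [Fintype ι]
    (Ax : ι → ℝ) (D : (ι → HahnSeries ℝ F) →ₗ[HahnSeries ℝ F] (ι → HahnSeries ℝ F))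
    (hD2 : ∀ c, D (D c) = 0) (hdec : StrictlyActionDecreasing Ax D)
    (SD : SingularDecomposition Ax D) (ε : ℝ) (hε : 0 < ε)
    (s : Finset ι) (hs : ∀ i ∈ s, EpsIsolated Ax D ε i) :
    (s.card : ℝ) / 2 ≤ (barCount SD ε : ℝ) :=
  barCount_ge_half_isolated_general Ax D hD2 SD ε s hs
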